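/- For an analytic self-map w of the unit disk with w(0) = 0, write w(z) = b₁z + b₂z² + ⋯. Then for every μ ∈ ℂ, |b₂ - μb₁²| ≤ max{1, |μ|}. -/

import Mathlib

open Metric Set Complex Function

lemma mobius_lt_one (a u : ℂ) (ha : ‖a‖ < 1) (hu : ‖u‖ < 1) :
    ‖(u - a) / (1 - (starRingEnd ℂ) a * u)‖ < 1 := by
  have key : (‖1 - (starRingEnd ℂ) a * u‖)^2 - (‖u - a‖)^2
      = (1 - (‖a‖)^2) * (1 - (‖u‖)^2) := by
    simp only [← Complex.normSq_eq_norm_sq]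
    simp [Complex.normSq_sub, Complex.normSq_mul, Complex.normSq_conj, Complex.mul_conj]
    ring_nf
  have hpos : 0 < (1 - (‖a‖)^2) * (1 - (‖u‖)^2) := by
    have h1 : (‖a‖)^2 < 1 := by nlinarith [norm_nonneg a]
    have h2 : (‖u‖)^2 < 1 := by nlinarith [norm_nonneg u]
    exact mul_pos (by linarith) (by linarith)
  have h2 : ‖u - a‖ < ‖1 - (starRingEnd ℂ) a * u‖ := by
    refine lt_of_pow_lt_pow_left₀ 2 (norm_nonneg _) ?_
    nlinarith
  rw [norm_div, div_lt_one (lt_of_le_of_lt (norm_nonneg _) h2)]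
  exact h2

lemma final_ineq (a b μ : ℂ) (hb : ‖b‖ ≤ 1 - (‖a‖)^2) :
    ‖b - μ * a ^ 2‖ ≤ max 1 (‖μ‖) := by
  have h1 : ‖b - μ * a ^ 2‖ ≤ ‖b‖ + ‖μ‖ * (‖a‖)^2 := by
    calc ‖b - μ * a ^ 2‖ ≤ ‖b‖ + ‖μ * a ^ 2‖ :=
          (norm_sub_le _ _).trans_eq rfl
      _ = ‖b‖ + ‖μ‖ * (‖a‖)^2 := by
          rw [norm_mul, norm_pow]
  have ha2 : 0 ≤ (‖a‖)^2 := sq_nonneg _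
  have ha2' : (‖a‖)^2 ≤ 1 := by nlinarith [norm_nonneg b]
  rcases le_total (‖μ‖) 1 with h | h
  · refine le_max_iff.mpr (Or.inl ?_); nlinarith
  · refine le_max_iff.mpr (Or.inr ?_); nlinarith

theorem keogh_merkes (w : ℂ → ℂ) (p : FormalMultilinearSeries ℂ ℂ ℂ)
    (hw : HasFPowerSeriesOnBall w p 0 1)
    (hw0 : w 0 = 0) (hwb : ∀ z ∈ Metric.ball (0 : ℂ) 1, ‖w z‖ < 1) :
    ∀ μ : ℂ, ‖p.coeff 2 - μ * (p.coeff 1) ^ 2‖ ≤ max 1 (‖μ‖) := by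
  intro μ
  set φ : ℂ → ℂ := dslope w 0 with hφdef
  have hp : HasFPowerSeriesAt w p 0 := hw.hasFPowerSeriesAt
  have hq : HasFPowerSeriesAt φ p.fslope 0 := hp.has_fpower_series_dslope_fslope
  have ha : φ 0 = p.coeff 1 := by
    have h : p.fslope.coeff 0 = φ 0 := hq.coeff_zero 1
    rw [FormalMultilinearSeries.coeff_fslope] at h
    exact h.symm
  have hb : deriv φ 0 = p.coeff 2 := by
    have h : deriv φ 0 = p.fslope.coeff 1 := hq.deriv
    rw [FormalMultilinearSeries.coeff_fslope] at h
    exact h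
  have hdw : DifferentiableOn ℂ w (ball 0 1) := by
    intro z hz
    refine ((hw.analyticOnNhd z ?_).differentiableAt).differentiableWithinAt
    rw [← ENNReal.ofReal_one, Metric.eball_ofReal]; exact hz
  have hmaps : MapsTo w (ball 0 1) (ball (w 0) 1) := by
    rw [hw0]
    exact fun z hz => mem_ball_zero_iff.2 (by simpa using hwb z hz)
  have hdφ : DifferentiableOn ℂ φ (ball 0 1) :=
    (differentiableOn_dslope (ball_mem_nhds 0 one_pos)).mpr hdw
  have hφle : ∀ z ∈ ball (0:ℂ) 1, ‖φ z‖ ≤ 1 := by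
    intro z hz
    simpa using Complex.norm_dslope_le_div_of_mapsTo_ball hdw (hmaps.mono_right ball_subset_closedBall) hz
  by_cases hA : ∀ z ∈ ball (0:ℂ) 1, ‖φ z‖ < 1
  · -- strict case: Schwarz–Pick
    have ha1 : ‖p.coeff 1‖ < 1 := ha ▸ hA 0 (mem_ball_self one_pos)
    set a : ℂ := p.coeff 1
    set b : ℂ := p.coeff 2
    have hφd : HasDerivAt φ b 0 := hb ▸ hq.differentiableAt.hasDerivAt
    set ψ : ℂ → ℂ := fun z => (φ z - a) / (1 - (starRingEnd ℂ) a * φ z) with hψdef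
    have hvne : ∀ z ∈ ball (0:ℂ) 1, 1 - (starRingEnd ℂ) a * φ z ≠ 0 := by
      intro z hz h
      have h1 : ‖(starRingEnd ℂ) a * φ z‖ < 1 := by
        rw [norm_mul, Complex.norm_conj]
        nlinarith [norm_nonneg a, norm_nonneg (φ z), hA z hz, hφle z hz]
      rw [sub_eq_zero] at h
      rw [← h] at h1
      simp at h1
    have hdψ : DifferentiableOn ℂ ψ (ball 0 1) := by
      refine DifferentiableOn.div (hdφ.sub_const a) ?_ hvne
      exact (differentiableOn_const 1).sub ((differentiableOn_const _).mul hdφ)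
    have hψ0 : ψ 0 = 0 := by
      simp [hψdef, ha]
    have hmapsψ : MapsTo ψ (ball 0 1) (ball (ψ 0) 1) := by
      rw [hψ0]
      intro z hz
      refine mem_ball_zero_iff.2 ?_
      simpa [hψdef] using mobius_lt_one a (φ z) ha1 (hA z hz)
    have hder : ‖deriv ψ 0‖ ≤ 1 := by
      have := Complex.norm_deriv_le_div_of_mapsTo_ball hdψ (hmapsψ.mono_right ball_subset_closedBall) one_pos
      simpa using this
    have hv0 : (1 : ℂ) - (starRingEnd ℂ) a * φ 0 = 1 - (Complex.normSq a : ℂ) := by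
      rw [ha]
      push_cast
      rw [← Complex.normSq_eq_conj_mul_self]
    have hderiv_val : deriv ψ 0 = b / (1 - (Complex.normSq a : ℂ)) := by
      have hu : HasDerivAt (fun z => φ z - a) b 0 := hφd.sub_const a
      have hv : HasDerivAt (fun z => 1 - (starRingEnd ℂ) a * φ z) (-((starRingEnd ℂ) a * b)) 0 :=
        (hφd.const_mul _).const_sub 1
      have h0 : (1 : ℂ) - (starRingEnd ℂ) a * φ 0 ≠ 0 := hvne 0 (mem_ball_self one_pos)
      have hsne : (1:ℂ) - (Complex.normSq a : ℂ) ≠ 0 := hv0 ▸ h0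
      have : deriv ψ 0 = (b * (1 - (starRingEnd ℂ) a * φ 0) - (φ 0 - a) * -((starRingEnd ℂ) a * b)) / (1 - (starRingEnd ℂ) a * φ 0) ^ 2 := (hu.div hv h0).deriv
      rw [this, hv0, ha, sub_self]
      field_simp
      ring
    have hbv : ‖b‖ ≤ 1 - (‖a‖)^2 := by
      have hns : Complex.normSq a < 1 := by
        rw [← Complex.sq_norm]; nlinarith [norm_nonneg a]
      have habs : ‖(1:ℂ) - (Complex.normSq a : ℂ)‖ = 1 - Complex.normSq a := by
        rw [show (1:ℂ) - (Complex.normSq a : ℂ) = ((1 - Complex.normSq a : ℝ) : ℂ) by push_cast; ring,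
          Complex.norm_of_nonneg (by linarith)]
      rw [hderiv_val, norm_div, habs, div_le_one (by linarith)] at hder
      rw [Complex.sq_norm]
      exact hder
    exact final_ineq a b μ hbv
  · -- max modulus case
    push_neg at hA
    obtain ⟨z₀, hz₀, hz₀ge⟩ := hA
    have hz₀eq : ‖φ z₀‖ = 1 := le_antisymm (hφle z₀ hz₀) hz₀ge
    have hmax : IsMaxOn (norm ∘ φ) (ball 0 1) z₀ := by
      intro z hz
      simp only [comp_apply]
      rw [hz₀eq]
      exact hφle z hz
    have heq : EqOn φ (const ℂ (φ z₀)) (ball 0 1) :=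
      Complex.eqOn_of_isPreconnected_of_isMaxOn_norm (convex_ball 0 1).isPreconnected
        isOpen_ball hdφ hz₀ hmax
    have hderiv0 : deriv φ 0 = 0 := by
      have hev : φ =ᶠ[nhds 0] const ℂ (φ z₀) :=
        Filter.eventuallyEq_of_mem (ball_mem_nhds 0 one_pos) heq
      rw [hev.deriv_eq]
      exact deriv_const 0 _
    have hc2 : p.coeff 2 = 0 := hb ▸ hderiv0
    have hc1 : ‖p.coeff 1‖ = 1 := by
      rw [← ha, heq (mem_ball_self one_pos)]
      exact hz₀eq
    rw [hc2, zero_sub, norm_neg, norm_mul, norm_pow, hc1]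
    simp
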